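/- Let b = −n+i with n ≥ 3 and let D ⊆ {0,...,n²} be separated. Then the base-b restricted digit Cantor set C_D (with |D| ≥ 2) is a Cantor space: a compact, totally disconnected metric space with no isolated points. -/

import Mathlib

open Filter Topology

/-- The base-`(-n+i)` restricted digit Cantor set with digit set `D`. -/
noncomputable def CDset (n : ℕ) (D : Set ℕ) : Set ℂ :=
  {z | ∃ a : ℕ → ℕ, (∀ k, a k ∈ D) ∧
    z = ∑' k : ℕ, (a k : ℂ) * (-(n : ℂ) + Complex.I) ^ (-(k + 1 : ℤ))}

lemma b_absSq (n : ℕ) : (‖(-(n:ℂ)+Complex.I)‖)^2 = (n:ℝ)^2 + 1 := by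
  rw [Complex.sq_norm, Complex.normSq_apply]
  simp
  ring

lemma b_ne (n : ℕ) : (-(n:ℂ) + Complex.I) ≠ 0 := by
  intro h
  have := congrArg Complex.im h
  simp at this

lemma hB_ge (n : ℕ) (hn : 3 ≤ n) : 3 ≤ ‖(-(n:ℂ)+Complex.I)‖ := by
  have h1 := b_absSq n
  have h2 : (0:ℝ) ≤ ‖(-(n:ℂ)+Complex.I)‖ := norm_nonneg _
  have h3 : (3:ℝ) ≤ (n:ℝ) := by exact_mod_cast hn
  nlinarith

lemma hB_lt (n : ℕ) (hn : 3 ≤ n) : ‖(-(n:ℂ)+Complex.I)‖ < n + 1 := by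
  have h1 := b_absSq n
  have h2 : (0:ℝ) ≤ ‖(-(n:ℂ)+Complex.I)‖ := norm_nonneg _
  have h3 : (3:ℝ) ≤ (n:ℝ) := by exact_mod_cast hn
  nlinarith [sq_nonneg (‖(-(n:ℂ)+Complex.I)‖ - ((n:ℝ)+1))]

lemma hB_gt (n : ℕ) : (n:ℝ) < ‖(-(n:ℂ)+Complex.I)‖ := by
  have h1 := b_absSq n
  have h2 : (0:ℝ) ≤ ‖(-(n:ℂ)+Complex.I)‖ := norm_nonneg _
  nlinarith

lemma norm_term (n : ℕ) (u : ℕ → ℤ) (k : ℕ) :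
    ‖(u k : ℂ) * ((-(n:ℂ)+Complex.I)⁻¹)^(k+1)‖
      = |(u k : ℝ)| * ((‖(-(n:ℂ)+Complex.I)‖)⁻¹)^(k+1) := by
  rw [norm_mul, norm_pow, norm_inv]
  simp [Complex.norm_intCast]

lemma geo_summable (n : ℕ) (hn : 3 ≤ n) (C : ℝ) :
    Summable (fun k : ℕ => C * ((‖(-(n:ℂ)+Complex.I)‖)⁻¹)^(k+1)) := by
  set B := ‖(-(n:ℂ)+Complex.I)‖ with hB
  have hB3 : 3 ≤ B := hB_ge n hn
  have h0 : (0:ℝ) ≤ B⁻¹ := by positivity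
  have h1 : B⁻¹ < 1 := by
    rw [inv_lt_one_iff₀]; right; linarith
  have := (summable_geometric_of_lt_one h0 h1).mul_left (C * B⁻¹)
  apply this.congr
  intro k
  rw [pow_succ']
  ring

lemma summable_aux (n : ℕ) (hn : 3 ≤ n) (u : ℕ → ℤ) (hu : ∀ k, |u k| ≤ (n:ℤ)^2) :
    Summable (fun k => (u k : ℂ) * ((-(n:ℂ)+Complex.I)⁻¹)^(k+1)) := by
  apply Summable.of_norm_bounded (geo_summable n hn ((n:ℝ)^2))
  intro k
  rw [norm_term]
  apply mul_le_mul_of_nonneg_right _ (by positivity)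
  have := hu k
  calc |(u k : ℝ)| = ((|u k| : ℤ) : ℝ) := by push_cast; ring
    _ ≤ (((n:ℤ)^2 : ℤ) : ℝ) := by exact_mod_cast this
    _ = (n:ℝ)^2 := by push_cast; ring

lemma tail_bound (n : ℕ) (hn : 3 ≤ n) (u : ℕ → ℤ) (hu : ∀ k, |u k| ≤ (n:ℤ)^2) (m : ℕ) :
    ‖∑' j : ℕ, (u (j+m) : ℂ) * ((-(n:ℂ)+Complex.I)⁻¹)^(j+m+1)‖
      ≤ (n:ℝ)^2 * ((‖(-(n:ℂ)+Complex.I)‖)⁻¹)^(m+1)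
        * (1 - (‖(-(n:ℂ)+Complex.I)‖)⁻¹)⁻¹ := by
  set B := ‖(-(n:ℂ)+Complex.I)‖ with hB
  have hB3 : 3 ≤ B := hB_ge n hn
  have h0 : (0:ℝ) ≤ B⁻¹ := by positivity
  have h1 : B⁻¹ < 1 := by rw [inv_lt_one_iff₀]; right; linarith
  have hnorm : ∀ j : ℕ, ‖(u (j+m) : ℂ) * ((-(n:ℂ)+Complex.I)⁻¹)^(j+m+1)‖
      ≤ (n:ℝ)^2 * (B⁻¹)^(m+1) * (B⁻¹)^j := by
    intro j
    have h2 : (|u (j+m)| : ℝ) ≤ (n:ℝ)^2 := by exact_mod_cast hu (j+m)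
    rw [norm_term]
    have : (B⁻¹)^(j+m+1) = (B⁻¹)^(m+1) * (B⁻¹)^j := by
      rw [← pow_add]; ring_nf
    rw [this]
    have h3 : (0:ℝ) ≤ (B⁻¹)^(m+1) * (B⁻¹)^j := by positivity
    calc |(u (j+m):ℝ)| * ((B⁻¹)^(m+1) * (B⁻¹)^j)
        ≤ (n:ℝ)^2 * ((B⁻¹)^(m+1)*(B⁻¹)^j) := mul_le_mul_of_nonneg_right h2 h3
      _ = _ := by ring
  have hgs : Summable (fun j : ℕ => (n:ℝ)^2 * (B⁻¹)^(m+1) * (B⁻¹)^j) :=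
    (summable_geometric_of_lt_one h0 h1).mul_left _
  calc ‖∑' j : ℕ, (u (j+m) : ℂ) * ((-(n:ℂ)+Complex.I)⁻¹)^(j+m+1)‖
      ≤ ∑' j : ℕ, (n:ℝ)^2 * (B⁻¹)^(m+1) * (B⁻¹)^j := by
        apply tsum_of_norm_bounded hgs.hasSum hnorm
    _ = (n:ℝ)^2 * (B⁻¹)^(m+1) * (1 - B⁻¹)⁻¹ := by
        rw [tsum_mul_left, tsum_geometric_of_lt_one h0 h1]

def G (n : ℕ) (e : ℕ → ℤ) : ℕ → ℤ × ℤ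
  | 0 => (e 0, 0)
  | m+1 => (-(n:ℤ) * (G n e m).1 - (G n e m).2 + e (m+1), (G n e m).1 - (n:ℤ) * (G n e m).2)

noncomputable def gC (n : ℕ) (e : ℕ → ℤ) (m : ℕ) : ℂ :=
  ((G n e m).1 : ℂ) + ((G n e m).2 : ℂ) * Complex.I

lemma gC_zero (n : ℕ) (e : ℕ → ℤ) : gC n e 0 = (e 0 : ℂ) := by simp [gC, G]

lemma gC_succ (n : ℕ) (e : ℕ → ℤ) (m : ℕ) :
    gC n e (m+1) = (-(n:ℂ)+Complex.I) * gC n e m + (e (m+1) : ℂ) := by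
  simp only [gC, G]
  push_cast
  linear_combination (-((G n e m).2 : ℂ)) * Complex.I_sq

lemma core (n : ℕ) (hn : 3 ≤ n) (e : ℕ → ℤ) (he : ∀ k, |e k| ≤ (n:ℤ)^2) (h0 : 2 ≤ |e 0|)
    (hsum : ∑' k : ℕ, (e k : ℂ) * ((-(n:ℂ)+Complex.I)⁻¹)^(k+1) = 0) : False := by
  set b : ℂ := -(n:ℂ)+Complex.I with hb
  set c : ℂ := b⁻¹ with hc
  set B : ℝ := ‖b‖ with hB
  have hB2 : B^2 = (n:ℝ)^2 + 1 := b_absSq n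
  have hB3 : 3 ≤ B := hB_ge n hn
  have hBlt : B < n + 1 := hB_lt n hn
  have hbne : b ≠ 0 := b_ne n
  have hn3 : (3:ℝ) ≤ (n:ℝ) := by exact_mod_cast hn
  set f : ℕ → ℂ := fun k => (e k : ℂ) * c^(k+1) with hf
  have hfs : Summable f := summable_aux n hn e he
  -- key identity
  have key : ∀ m, gC n e m * c^(m+1) + ∑' j : ℕ, f (j+(m+1)) = 0 := by
    intro m
    induction m with
    | zero =>
      have h1 : ∑' k, f k = f 0 + ∑' k, f (k+1) := hfs.tsum_eq_zero_add
      have h2 : (fun j : ℕ => f (j+1)) = fun k : ℕ => f (k+1) := rfl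
      rw [gC_zero]
      calc (e 0 : ℂ) * c^(0+1) + ∑' j : ℕ, f (j+(0+1))
          = f 0 + ∑' k : ℕ, f (k+1) := by norm_num [hf]
        _ = ∑' k, f k := h1.symm
        _ = 0 := hsum
    | succ m ih =>
      have hshift : Summable (fun j => f (j + (m+1))) := (summable_nat_add_iff (m+1)).2 hfs
      have hpeel : ∑' j : ℕ, f (j+(m+1)) = f (m+1) + ∑' j : ℕ, f (j+(m+2)) := by
        rw [hshift.tsum_eq_zero_add]
        congr 1
        · norm_num
        · exact tsum_congr fun j => by rw [show j+1+(m+1) = j+(m+2) by omega]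
      have hbc : b * c^(m+2) = c^(m+1) := by
        rw [hc, pow_succ']
        rw [← mul_assoc, mul_inv_cancel₀ hbne, one_mul]
      have hstep : gC n e (m+1) * c^(m+2) = gC n e m * c^(m+1) + f (m+1) := by
        rw [gC_succ, add_mul,
          show (-(n:ℂ)+Complex.I) * gC n e m * c^(m+2) = gC n e m * (b * c^(m+2)) by
            rw [hb]; ring,
          hbc]
      rw [show m+1+1 = m+2 from rfl, hstep]
      rw [hpeel] at ih
      linear_combination ih
  -- norm bound ‖gC m‖ ≤ B + 1
  have hgle : ∀ m, ‖gC n e m‖ ≤ B + 1 := by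
    intro m
    have heq : gC n e m * c^(m+1) = -∑' j : ℕ, f (j+(m+1)) := by linear_combination key m
    have htail := tail_bound n hn e he (m+1)
    have h1 : ‖gC n e m‖ * (B⁻¹)^(m+1) ≤ (n:ℝ)^2 * (B⁻¹)^(m+2) * (1-B⁻¹)⁻¹ := by
      have hnm : ‖gC n e m * c^(m+1)‖ = ‖gC n e m‖ * (B⁻¹)^(m+1) := by
        rw [norm_mul, norm_pow, norm_inv]
      rw [← hnm, heq, norm_neg]
      exact htail
    have hpos : (0:ℝ) < (B⁻¹)^(m+1) := by positivity
    have h2 : ‖gC n e m‖ * (B⁻¹)^(m+1) ≤ ((n:ℝ)^2 * B⁻¹ * (1-B⁻¹)⁻¹) * (B⁻¹)^(m+1) := by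
      calc ‖gC n e m‖ * (B⁻¹)^(m+1) ≤ (n:ℝ)^2 * (B⁻¹)^(m+2) * (1-B⁻¹)⁻¹ := h1
        _ = ((n:ℝ)^2 * B⁻¹ * (1-B⁻¹)⁻¹) * (B⁻¹)^(m+1) := by rw [pow_succ]; ring
    have h3 : ‖gC n e m‖ ≤ (n:ℝ)^2 * B⁻¹ * (1-B⁻¹)⁻¹ := le_of_mul_le_mul_right h2 hpos
    have hval : (n:ℝ)^2 * B⁻¹ * (1-B⁻¹)⁻¹ = B + 1 := by
      have hBne : B ≠ 0 := by linarith
      have hB1 : B - 1 ≠ 0 := by linarith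
      have h1B' : (1:ℝ) - B⁻¹ = (B-1)/B := by field_simp
      rw [h1B', inv_div, show (n:ℝ)^2 = (B+1)*(B-1) by linear_combination -hB2]
      field_simp
    linarith [h3, hval.le, hval.ge]
  -- coordinates
  set x : ℕ → ℤ := fun m => (G n e m).1 with hx'
  set y : ℕ → ℤ := fun m => (G n e m).2 with hy'
  have hxy : ∀ m, ((x m:ℝ))^2 + ((y m:ℝ))^2 ≤ (B+1)^2 := by
    intro m
    have h := hgle m
    have habs2 : ‖gC n e m‖^2 = ((x m:ℝ))^2 + ((y m:ℝ))^2 := by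
      rw [Complex.sq_norm, gC, Complex.normSq_apply]
      simp
      ring
    nlinarith [norm_nonneg (gC n e m)]
  have hyle : ∀ m, |y m| ≤ (n:ℤ)+1 := by
    intro m
    have h := hxy m
    have hr : |(y m:ℝ)| ≤ B+1 := by
      nlinarith [sq_nonneg ((x m:ℝ)), sq_abs ((y m:ℝ)), abs_nonneg ((y m:ℝ)),
        sq_nonneg (|(y m:ℝ)| - (B+1))]
    have hr2 : |(y m:ℝ)| < (n:ℝ)+2 := by linarith
    have : |y m| < (n:ℤ)+2 := by exact_mod_cast hr2
    omega
  have hxle : ∀ m, 2 ≤ |y m| → |x m| ≤ (n:ℤ) := by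
    intro m h2
    have h := hxy m
    have h2r : (2:ℝ) ≤ |(y m:ℝ)| := by exact_mod_cast h2
    have h4 : (4:ℝ) ≤ ((y m:ℝ))^2 := by nlinarith [sq_abs ((y m:ℝ))]
    have hr : |(x m:ℝ)| < (n:ℝ)+1 := by
      nlinarith [sq_abs ((x m:ℝ)), abs_nonneg ((x m:ℝ)),
        sq_nonneg (|(x m:ℝ)| - ((n:ℝ)+1)), hB2, hBlt, hB3]
    have : |x m| < (n:ℤ)+1 := by exact_mod_cast hr
    omega
  have hyrec : ∀ m, y (m+1) = x m - (n:ℤ) * y m := fun m => rfl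
  have hgrow : ∀ m : ℕ, 1 ≤ m → (m:ℤ)+1 ≤ |y m| := by
    intro m
    induction m with
    | zero => intro h; exact absurd h (by norm_num)
    | succ m ih =>
      intro _
      rcases Nat.eq_zero_or_pos m with hm | hm
      · subst hm
        have hy1 : y 1 = e 0 := by
          rw [hyrec 0]
          show x 0 - (n:ℤ) * y 0 = e 0
          simp [hx', hy', G]
        rw [hy1]
        push_cast
        omega
      · have ihm := ih hm
        have h2 : 2 ≤ |y m| := by
          have : (1:ℤ) ≤ (m:ℤ) := by exact_mod_cast hm
          omega
        have hxm := hxle m h2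
        have habs : (n:ℤ) * |y m| - |x m| ≤ |y (m+1)| := by
          rw [hyrec m]
          calc (n:ℤ) * |y m| - |x m| = |(n:ℤ) * y m| - |x m| := by
                rw [abs_mul, abs_of_nonneg (by positivity : (0:ℤ) ≤ (n:ℤ))]
            _ ≤ |(n:ℤ) * y m - x m| := abs_sub_abs_le_abs_sub _ _
            _ = |x m - (n:ℤ) * y m| := abs_sub_comm _ _
        have hn' : (3:ℤ) ≤ (n:ℤ) := by exact_mod_cast hn
        have hm' : (1:ℤ) ≤ (m:ℤ) := by exact_mod_cast hm
        push_cast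
        nlinarith [ihm, hxm, habs, hn', hm', abs_nonneg (y m), abs_nonneg (x m)]
  have hc1 := hgrow (n+1) (by omega)
  have hc2 := hyle (n+1)
  push_cast at hc1
  omega

lemma nat_bound (n : ℕ) (D : Set ℕ) (hD : ∀ d ∈ D, d ≤ n ^ 2) (a : ℕ → ℕ)
    (ha : ∀ k, a k ∈ D) : ∀ k, |(a k : ℤ)| ≤ (n:ℤ)^2 := by
  intro k
  have h1 : a k ≤ n^2 := hD _ (ha k)
  rw [abs_of_nonneg (Int.ofNat_nonneg _)]
  exact_mod_cast h1

lemma summable_nat (n : ℕ) (hn : 3 ≤ n) (D : Set ℕ) (hD : ∀ d ∈ D, d ≤ n ^ 2) (a : ℕ → ℕ)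
    (ha : ∀ k, a k ∈ D) :
    Summable (fun k => ((a k : ℕ) : ℂ) * ((-(n:ℂ)+Complex.I)⁻¹)^(k+1)) := by
  have := summable_aux n hn (fun k => (a k : ℤ)) (nat_bound n D hD a ha)
  exact this.congr fun k => by push_cast; ring

lemma seq_inj (n : ℕ) (hn : 3 ≤ n) (D : Set ℕ) (hD : ∀ d ∈ D, d ≤ n ^ 2)
    (hsep : ∀ d ∈ D, ∀ d' ∈ D, d ≠ d' → 1 < |(d : ℤ) - (d' : ℤ)|)
    (a a' : ℕ → ℕ) (ha : ∀ k, a k ∈ D) (ha' : ∀ k, a' k ∈ D)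
    (hs : ∑' k : ℕ, (a k : ℂ) * ((-(n:ℂ)+Complex.I)⁻¹)^(k+1)
        = ∑' k : ℕ, (a' k : ℂ) * ((-(n:ℂ)+Complex.I)⁻¹)^(k+1)) : a = a' := by
  classical
  by_contra hne
  have hex : ∃ k, a k ≠ a' k := by
    by_contra h; push_neg at h; exact hne (funext h)
  set K := Nat.find hex with hKdef
  have hK : a K ≠ a' K := Nat.find_spec hex
  have hKmin : ∀ k < K, a k = a' k := by
    intro k hk
    have := Nat.find_min hex hk
    push_neg at this
    exact this
  set c : ℂ := (-(n:ℂ)+Complex.I)⁻¹ with hc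
  set d : ℕ → ℤ := fun k => (a k : ℤ) - (a' k : ℤ) with hd
  have hdb : ∀ k, |d k| ≤ (n:ℤ)^2 := by
    intro k
    have h1 := nat_bound n D hD a ha k
    have h2 := nat_bound n D hD a' ha' k
    rw [hd]
    simp only [abs_le] at *
    omega
  have hsa := summable_nat n hn D hD a ha
  have hsa' := summable_nat n hn D hD a' ha'
  have hsd : Summable (fun k => (d k : ℂ) * c^(k+1)) := summable_aux n hn d hdb
  have hdiff : ∑' k : ℕ, (d k : ℂ) * c^(k+1) = 0 := by
    have h := hsa.tsum_sub hsa'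
    have h2 : ∑' k : ℕ, ((a k : ℂ) * c^(k+1) - (a' k : ℂ) * c^(k+1))
        = ∑' k : ℕ, (d k : ℂ) * c^(k+1) := by
      apply tsum_congr
      intro k
      rw [hd]
      push_cast
      ring
    rw [h2] at h
    rw [h, hs, sub_self]
  have hsplit := Summable.sum_add_tsum_nat_add K hsd
  have hzero0 : ∑ i ∈ Finset.range K, (d i : ℂ) * c^(i+1) = 0 := by
    apply Finset.sum_eq_zero
    intro i hi
    have : d i = 0 := by
      show (a i : ℤ) - (a' i : ℤ) = 0
      rw [hKmin i (Finset.mem_range.mp hi), sub_self]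
    rw [this]
    simp
  have htail0 : ∑' i : ℕ, (d (i+K) : ℂ) * c^(i+K+1) = 0 := by
    rw [hdiff, hzero0] at hsplit
    simpa using hsplit
  have hfac : ∑' i : ℕ, (d (i+K) : ℂ) * c^(i+K+1)
      = c^K * ∑' i : ℕ, (d (i+K) : ℂ) * c^(i+1) := by
    rw [← tsum_mul_left]
    apply tsum_congr
    intro i
    rw [show i+K+1 = (i+1)+K by omega, pow_add]
    ring
  have hcne : c^K ≠ 0 := pow_ne_zero _ (inv_ne_zero (b_ne n))
  have hzero : ∑' i : ℕ, (d (i+K) : ℂ) * c^(i+1) = 0 := by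
    rw [hfac] at htail0
    exact (mul_eq_zero.mp htail0).resolve_left hcne
  apply core n hn (fun i => d (i+K)) (fun i => hdb (i+K)) _ hzero
  have h1 := hsep (a K) (ha K) (a' K) (ha' K) hK
  show 2 ≤ |d (0+K)|
  rw [zero_add]
  show (2:ℤ) ≤ |(a K : ℤ) - (a' K : ℤ)|
  omega

/-- If `b = -n+i` with `n ≥ 3` and `D ⊆ {0,…,n²}` is separated with at least
two digits, then `C_D` is a Cantor space: compact, totally disconnected and
perfect (closed with no isolated points). -/
theorem stmt10 (n : ℕ) (hn : 3 ≤ n) (D : Set ℕ) (hD : ∀ d ∈ D, d ≤ n ^ 2)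
    (hsep : ∀ d ∈ D, ∀ d' ∈ D, d ≠ d' → 1 < |(d : ℤ) - (d' : ℤ)|)
    (hcard : D.Nontrivial) :
    IsCompact (CDset n D) ∧ IsTotallyDisconnected (CDset n D) ∧
      Perfect (CDset n D) := by
  classical
  have hzpow : ∀ k : ℕ, (-(n:ℂ) + Complex.I) ^ (-(k + 1 : ℤ))
      = ((-(n:ℂ) + Complex.I)⁻¹)^(k+1) := by
    intro k
    rw [zpow_neg, show ((k:ℤ)+1) = ((k+1 : ℕ) : ℤ) by push_cast; ring, zpow_natCast, ← inv_pow]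
  haveI hDfin : Finite ↥D :=
    ((Set.finite_Iic (n^2)).subset fun d hd => Set.mem_Iic.mpr (hD d hd)).to_subtype
  set Φ : (ℕ → ↥D) → ℂ := fun a => ∑' k : ℕ, ((a k : ℕ) : ℂ) * ((-(n:ℂ)+Complex.I)⁻¹)^(k+1)
    with hΦ
  have hrange : CDset n D = Set.range Φ := by
    ext z
    constructor
    · rintro ⟨a, haD, rfl⟩
      exact ⟨fun k => ⟨a k, haD k⟩, (tsum_congr fun k => by rw [hzpow k]).symm⟩
    · rintro ⟨a, rfl⟩
      exact ⟨fun k => (a k : ℕ), fun k => (a k).2, tsum_congr fun k => by rw [hzpow k]⟩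
  set B : ℝ := ‖(-(n:ℂ)+Complex.I)‖ with hB
  have hB3 : 3 ≤ B := hB_ge n hn
  have hbound : ∀ (a : ℕ → ↥D) (k : ℕ),
      ‖((a k : ℕ) : ℂ) * ((-(n:ℂ)+Complex.I)⁻¹)^(k+1)‖ ≤ (n:ℝ)^2 * (B⁻¹)^(k+1) := by
    intro a k
    have h1 : (((a k : ℕ)) : ℂ) = ((((a k : ℕ) : ℤ)) : ℂ) := by push_cast; ring
    rw [h1, norm_term n (fun j => ((a j : ℕ) : ℤ)) k]
    apply mul_le_mul_of_nonneg_right _ (by positivity)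
    have h2 := nat_bound n D hD (fun j => (a j : ℕ)) (fun j => (a j).2) k
    have h3 : |((a k : ℕ) : ℝ)| ≤ (n:ℝ)^2 := by exact_mod_cast h2
    exact_mod_cast h3
  have hcont : Continuous Φ := by
    apply continuous_tsum
    · intro k
      exact ((continuous_of_discreteTopology (f := fun m : ℕ => (m:ℂ))).comp
        (continuous_subtype_val.comp (continuous_apply k))).mul continuous_const
    · exact geo_summable n hn ((n:ℝ)^2)
    · exact fun k a => hbound a k
  have hinj : Function.Injective Φ := by
    intro a a' h
    have := seq_inj n hn D hD hsep (fun k => (a k : ℕ)) (fun k => (a' k : ℕ))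
      (fun k => (a k).2) (fun k => (a' k).2) h
    funext k
    exact Subtype.ext (congrFun this k)
  have hemb : Topology.IsClosedEmbedding Φ := hcont.isClosedEmbedding hinj
  have hcomp : IsCompact (CDset n D) := by
    rw [hrange]; exact isCompact_range hcont
  refine ⟨hcomp, ?_, ?_⟩
  · rw [hrange, hemb.toIsEmbedding.isTotallyDisconnected_range]
    infer_instance
  · refine ⟨hcomp.isClosed, ?_⟩
    · rw [preperfect_iff_nhds]
      intro z hz U hU
      rw [hrange] at hz
      obtain ⟨a, rfl⟩ := hz
      obtain ⟨ε, hε, hball⟩ := Metric.mem_nhds_iff.mp hU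
      obtain ⟨k, hk⟩ := exists_pow_lt_of_lt_one
        (show (0:ℝ) < ε / ((n:ℝ)^2+1) by positivity)
        (show (3⁻¹:ℝ) < 1 by norm_num)
      -- pick a digit different from a k
      obtain ⟨d1, hd1, d2, hd2, hdd⟩ := hcard
      obtain ⟨d', hd'D, hd'ne⟩ : ∃ d', d' ∈ D ∧ d' ≠ (a k : ℕ) := by
        by_cases h : (a k : ℕ) = d1
        · exact ⟨d2, hd2, fun hc => hdd (hc ▸ h.symm ▸ rfl)⟩
        · exact ⟨d1, hd1, fun hc => h (hc ▸ rfl)⟩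
      set a' : ℕ → ↥D := Function.update a k ⟨d', hd'D⟩ with ha'
      have hane : a' ≠ a := by
        intro h
        apply hd'ne
        have := congrFun h k
        rw [ha', Function.update_self] at this
        exact congrArg Subtype.val this
      have hsum1 : Summable (fun j => ((a j : ℕ) : ℂ) * ((-(n:ℂ)+Complex.I)⁻¹)^(j+1)) :=
        summable_nat n hn D hD _ (fun j => (a j).2)
      have hsum2 : Summable (fun j => ((a' j : ℕ) : ℂ) * ((-(n:ℂ)+Complex.I)⁻¹)^(j+1)) :=
        summable_nat n hn D hD _ (fun j => (a' j).2)
      have hdiff : Φ a' - Φ a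
          = (((d' : ℕ) : ℂ) - ((a k : ℕ) : ℂ)) * ((-(n:ℂ)+Complex.I)⁻¹)^(k+1) := by
        rw [hΦ]
        simp only
        rw [← hsum2.tsum_sub hsum1]
        rw [tsum_eq_single k]
        · rw [ha', Function.update_self]
          ring
        · intro j hj
          rw [ha', Function.update_of_ne hj]
          ring
      have hfinal : ∀ X : ℤ, |X| ≤ (n:ℤ)^2 →
          |(X:ℝ)| * ((‖(-(n:ℂ)+Complex.I)‖)⁻¹)^(k+1) < ε := by
        intro X hX
        have habs : |(X:ℝ)| ≤ (n:ℝ)^2 := by exact_mod_cast hX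
        have hBinv : ((‖(-(n:ℂ)+Complex.I)‖)⁻¹)^(k+1) ≤ (3⁻¹:ℝ)^(k+1) := by
          apply pow_le_pow_left₀ (by positivity)
          rw [inv_le_inv₀ (by rw [← hB]; linarith) (by norm_num)]
          rw [← hB]; exact hB3
        have h3 : (3⁻¹:ℝ)^(k+1) ≤ (3⁻¹:ℝ)^k :=
          pow_le_pow_of_le_one (by norm_num) (by norm_num) (by omega)
        have hpos : (0:ℝ) < (n:ℝ)^2+1 := by positivity
        calc |(X:ℝ)| * ((‖(-(n:ℂ)+Complex.I)‖)⁻¹)^(k+1)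
            ≤ (n:ℝ)^2 * (3⁻¹:ℝ)^k := by
              apply mul_le_mul habs (le_trans hBinv h3) (by positivity) (by positivity)
          _ < (n:ℝ)^2 * (ε / ((n:ℝ)^2+1)) := by
              apply mul_lt_mul_of_pos_left hk (by positivity)
          _ < ε := by
              rw [show (n:ℝ)^2 * (ε / ((n:ℝ)^2+1)) = ((n:ℝ)^2 / ((n:ℝ)^2+1)) * ε by ring]
              nlinarith [(div_lt_one hpos).mpr (by linarith : (n:ℝ)^2 < (n:ℝ)^2+1)]
      have hdist : dist (Φ a') (Φ a) < ε := by
        rw [dist_eq_norm, hdiff]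
        have h1 : (((d' : ℕ) : ℂ) - ((a k : ℕ) : ℂ))
            = ((((d' : ℕ) : ℤ) - ((a k : ℕ) : ℤ) : ℤ) : ℂ) := by push_cast; ring
        have h2 := norm_term n (fun _ => ((d' : ℕ) : ℤ) - ((a k : ℕ) : ℤ)) k
        rw [h1, h2]
        apply hfinal
        have hd'le : (d' : ℤ) ≤ (n:ℤ)^2 := by exact_mod_cast hD d' hd'D
        have hakle : ((a k : ℕ) : ℤ) ≤ (n:ℤ)^2 := by exact_mod_cast hD _ (a k).2
        rw [abs_le]
        omega
      refine ⟨Φ a', ⟨hball (Metric.mem_ball.mpr hdist), ?_⟩, fun h => hane (hinj h)⟩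
      rw [hrange]
      exact ⟨a', rfl⟩
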